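/- arXiv:2108.05910 — 3 statements merged into one kernel-verified Lean document; each statement's English description precedes it below -/
import Mathlib

section
/- Let A = [A11, A12; A21, A22] be a block 2×2 complex matrix with A11 an invertible square matrix. Let Z denote the block 2×2 matrix Z = [A11⁻¹, −A11⁻¹A12; 0, I]. Then Im(PPT(A)) = Zᴴ (Im A) Z, where Zᴴ denotes the conjugate transpose of Z. -/
open Matrix Complex

/-- The principal pivot transform of a block 2×2 matrix
`A = [A11, A12; A21, A22]` with `A11` an invertible square block:
`PPT(A) = [−A11⁻¹, A11⁻¹A12; A21A11⁻¹, A22 − A21A11⁻¹A12]`. -/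
noncomputable def PPT {n m : ℕ} (A : Matrix (Fin n ⊕ Fin m) (Fin n ⊕ Fin m) ℂ) :
    Matrix (Fin n ⊕ Fin m) (Fin n ⊕ Fin m) ℂ :=
  Matrix.fromBlocks (-(A.toBlocks₁₁)⁻¹) ((A.toBlocks₁₁)⁻¹ * A.toBlocks₁₂)
    (A.toBlocks₂₁ * (A.toBlocks₁₁)⁻¹)
    (A.toBlocks₂₂ - A.toBlocks₂₁ * (A.toBlocks₁₁)⁻¹ * A.toBlocks₁₂)

/-- The imaginary part of a square complex matrix: `Im M = (M − Mᴴ)/(2i)`. -/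
noncomputable def matIm {k : Type*} (M : Matrix k k ℂ) : Matrix k k ℂ :=
  (2 * Complex.I)⁻¹ • (M - Mᴴ)

theorem im_ppt_hermitian_square {n m : ℕ}
    (A11 : Matrix (Fin n) (Fin n) ℂ) (A12 : Matrix (Fin n) (Fin m) ℂ)
    (A21 : Matrix (Fin m) (Fin n) ℂ) (A22 : Matrix (Fin m) (Fin m) ℂ)
    (hA11 : IsUnit A11) :
    matIm (PPT (Matrix.fromBlocks A11 A12 A21 A22)) =
      (Matrix.fromBlocks A11⁻¹ (-(A11⁻¹ * A12)) 0 1)ᴴ *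
        matIm (Matrix.fromBlocks A11 A12 A21 A22) *
        Matrix.fromBlocks A11⁻¹ (-(A11⁻¹ * A12)) 0 1 := by
  have hd : IsUnit A11.det := (Matrix.isUnit_iff_isUnit_det _).mp hA11
  have hd' : IsUnit A11ᴴ.det := by rw [Matrix.det_conjTranspose]; exact hd.star
  have hct : A11⁻¹ᴴ = A11ᴴ⁻¹ := Matrix.conjTranspose_nonsing_inv A11
  have h1 : A11⁻¹ * A11 = 1 := Matrix.nonsing_inv_mul _ hd
  have h2 : A11 * A11⁻¹ = 1 := Matrix.mul_nonsing_inv _ hd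
  have h3 : A11⁻¹ᴴ * A11ᴴ = 1 := by rw [← conjTranspose_mul, h2, conjTranspose_one]
  have h4 : A11ᴴ * A11⁻¹ᴴ = 1 := by rw [← conjTranspose_mul, h1, conjTranspose_one]
  have key : PPT (Matrix.fromBlocks A11 A12 A21 A22) -
      (PPT (Matrix.fromBlocks A11 A12 A21 A22))ᴴ =
      (Matrix.fromBlocks A11⁻¹ (-(A11⁻¹ * A12)) 0 1)ᴴ *
        (Matrix.fromBlocks A11 A12 A21 A22 -
          (Matrix.fromBlocks A11 A12 A21 A22)ᴴ) *
        Matrix.fromBlocks A11⁻¹ (-(A11⁻¹ * A12)) 0 1 := by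
    simp only [PPT, Matrix.toBlocks_fromBlocks₁₁, Matrix.toBlocks_fromBlocks₁₂,
      Matrix.toBlocks_fromBlocks₂₁, Matrix.toBlocks_fromBlocks₂₂,
      Matrix.fromBlocks_conjTranspose, sub_eq_add_neg, Matrix.fromBlocks_neg,
      Matrix.fromBlocks_add, Matrix.fromBlocks_multiply]
    rw [Matrix.fromBlocks_inj]
    refine ⟨?_, ?_, ?_, ?_⟩ <;>
      simp [Matrix.add_mul, Matrix.mul_add, Matrix.neg_mul, Matrix.mul_neg,
        Matrix.mul_assoc, h1, h2, h3, h4, hct,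
        Matrix.nonsing_inv_mul_cancel_left _ _ hd, Matrix.mul_nonsing_inv_cancel_left _ _ hd,
        Matrix.nonsing_inv_mul_cancel_left _ _ hd', Matrix.mul_nonsing_inv_cancel_left _ _ hd'] <;>
      abel
  unfold matIm
  rw [key, Matrix.mul_smul, Matrix.smul_mul]
end

section
/- Let A = [A11, A12; A21, A22] and H be like-sized self-adjoint block 2×2 complex matrices with A11 an invertible square matrix. Let Z denote the block 2×2 matrix Z = [A11⁻¹, −A11⁻¹A12; 0, I]. Then the directional derivative of PPT at A in direction H exists and equals Zᴴ H Z; that is, the map t ↦ PPT(A + tH) is differentiable at t = 0 with derivative (d/dt) PPT(A + tH)|_{t=0} = Zᴴ H Z. -/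
/-!
With `P = [1, 0; 0, 0]` and `Q = [0, 0; 0, 1]`, the principal pivot transform is a linear-fractional
function of `A`: `PPT(A) = (QA - P)(Q + PA)⁻¹`, where `Q + PA = [A11, A12; 0, 1]` is invertible with
inverse `Z`. Differentiating along `A + tH` gives `(QH - PPT(A) PH) Z = (Q - PPT(A) P) H Z`, and
`Q - PPT(A) P = [A11⁻¹, 0; -A21 A11⁻¹, 1]`, which is `Zᴴ` when `A` is self-adjoint.
-/

open Matrix

attribute [local instance] Matrix.frobeniusNormedAddCommGroup Matrix.frobeniusNormedSpace

open Filter Topology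

section LinearFractional

variable {𝕜 R : Type*} [NontriviallyNormedField 𝕜] [NormedRing R] [NormedAlgebra 𝕜 R]

theorem eventually_isUnit_add_smul [HasSummableGeomSeries R] {Y : R} (Y' : R) (hY : IsUnit Y) :
    ∀ᶠ t : 𝕜 in 𝓝 0, IsUnit (Y + t • Y') := by
  have hc : Continuous fun t : 𝕜 => Y + t • Y' := by fun_prop
  exact hc.continuousAt.eventually_mem (Units.isOpen.mem_nhds (by simpa using hY))

theorem hasDerivAt_add_smul_mul_ringInverse_add_smul [CompleteSpace R] (X X' Y Y' : R)
    (hY : IsUnit Y) :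
    HasDerivAt (fun t : 𝕜 => (X + t • X') * Ring.inverse (Y + t • Y'))
      ((X' - X * Ring.inverse Y * Y') * Ring.inverse Y) 0 := by
  have line : ∀ V V' : R, HasDerivAt (fun t : 𝕜 => V + t • V') V' 0 := fun V V' =>
    ((hasDerivAt_id (0 : 𝕜)).smul_const V').const_add V |>.congr_deriv (one_smul _ _)
  obtain ⟨u, rfl⟩ := hY
  have hinv : HasDerivAt (fun t : 𝕜 => Ring.inverse (↑u + t • Y')) (-(↑u⁻¹ * Y' * ↑u⁻¹)) 0 :=
    (hasFDerivAt_ringInverse u).comp_hasDerivAt_of_eq 0 (line (u : R) Y') (by simp)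
  refine ((line X X').mul hinv).congr_deriv ?_
  simp only [zero_smul, add_zero, Ring.inverse_unit]
  noncomm_ring

end LinearFractional

section BlockProjection

variable {n m R : Type*} [DecidableEq n] [DecidableEq m]

def blockProj₁ [Zero R] [One R] : Matrix (n ⊕ m) (n ⊕ m) R := fromBlocks 1 0 0 0

def blockProj₂ [Zero R] [One R] : Matrix (n ⊕ m) (n ⊕ m) R := fromBlocks 0 0 0 1

variable [Fintype n] [Fintype m] [Ring R]

theorem blockProj₂_add_blockProj₁_mul (A : Matrix (n ⊕ m) (n ⊕ m) R) :
    blockProj₂ + blockProj₁ * A = fromBlocks A.toBlocks₁₁ A.toBlocks₁₂ 0 1 := by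
  rw [← fromBlocks_toBlocks A, blockProj₁, blockProj₂, fromBlocks_multiply, fromBlocks_add]
  simp

theorem blockProj₂_mul_sub_blockProj₁ (A : Matrix (n ⊕ m) (n ⊕ m) R) :
    blockProj₂ * A - blockProj₁ = fromBlocks (-1) 0 A.toBlocks₂₁ A.toBlocks₂₂ := by
  rw [← fromBlocks_toBlocks A, blockProj₁, blockProj₂, fromBlocks_multiply, sub_eq_add_neg,
    fromBlocks_neg, fromBlocks_add]
  simp

theorem blockProj₂_sub_mul_blockProj₁ (A : Matrix (n ⊕ m) (n ⊕ m) R) :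
    blockProj₂ - A * blockProj₁ = fromBlocks (-A.toBlocks₁₁) 0 (-A.toBlocks₂₁) 1 := by
  rw [← fromBlocks_toBlocks A, blockProj₁, blockProj₂, fromBlocks_multiply, sub_eq_add_neg,
    fromBlocks_neg, fromBlocks_add]
  simp

end BlockProjection

section PivotFactor

variable {n m K : Type*} [Fintype n] [DecidableEq n] [DecidableEq m] [CommRing K]

theorem Matrix.IsHermitian.conjTranspose_fromBlocks_inv_neg_inv_mul [StarRing K]
    {A : Matrix (n ⊕ m) (n ⊕ m) K} (hA : A.IsHermitian) :
    (Matrix.fromBlocks A.toBlocks₁₁⁻¹ (-(A.toBlocks₁₁⁻¹ * A.toBlocks₁₂)) (0 : Matrix m n K) 1)ᴴ =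
      Matrix.fromBlocks A.toBlocks₁₁⁻¹ 0 (-(A.toBlocks₂₁ * A.toBlocks₁₁⁻¹)) 1 := by
  rw [← fromBlocks_toBlocks A, isHermitian_fromBlocks_iff] at hA
  obtain ⟨h₁₁, h₁₂, -, -⟩ := hA
  simp [fromBlocks_conjTranspose, conjTranspose_nonsing_inv, h₁₁.eq, h₁₂]

variable [Fintype m]

theorem isUnit_blockProj₂_add_blockProj₁_mul_iff {A : Matrix (n ⊕ m) (n ⊕ m) K} :
    IsUnit (blockProj₂ + blockProj₁ * A) ↔ IsUnit A.toBlocks₁₁ := by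
  simp [blockProj₂_add_blockProj₁_mul, isUnit_fromBlocks_zero₂₁]

theorem inv_blockProj₂_add_blockProj₁_mul {A : Matrix (n ⊕ m) (n ⊕ m) K}
    (hA₁₁ : IsUnit A.toBlocks₁₁) :
    (blockProj₂ + blockProj₁ * A)⁻¹ =
      fromBlocks A.toBlocks₁₁⁻¹ (-(A.toBlocks₁₁⁻¹ * A.toBlocks₁₂)) 0 1 := by
  rw [blockProj₂_add_blockProj₁_mul, inv_fromBlocks_zero₂₁_of_isUnit_iff _ _ _ (by simp [hA₁₁])]
  simp

end PivotFactor

section PPT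

variable {n m : ℕ}

theorem ppt_eq_mul_inv {A : Matrix (Fin n ⊕ Fin m) (Fin n ⊕ Fin m) ℂ}
    (hA₁₁ : IsUnit A.toBlocks₁₁) :
    PPT A = (blockProj₂ * A - blockProj₁) * (blockProj₂ + blockProj₁ * A)⁻¹ := by
  rw [blockProj₂_mul_sub_blockProj₁, inv_blockProj₂_add_blockProj₁_mul hA₁₁, fromBlocks_multiply,
    PPT]
  simp [sub_eq_neg_add, Matrix.mul_assoc]

theorem blockProj₂_sub_ppt_mul_blockProj₁ (A : Matrix (Fin n ⊕ Fin m) (Fin n ⊕ Fin m) ℂ) :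
    blockProj₂ - PPT A * blockProj₁ =
      fromBlocks A.toBlocks₁₁⁻¹ 0 (-(A.toBlocks₂₁ * A.toBlocks₁₁⁻¹)) 1 := by
  rw [blockProj₂_sub_mul_blockProj₁, PPT]
  simp

end PPT

section Main

attribute [local instance] Matrix.frobeniusNormedRing Matrix.frobeniusNormedAlgebra

theorem ppt_hasDerivAt_general {n m : ℕ}
    (A H : Matrix (Fin n ⊕ Fin m) (Fin n ⊕ Fin m) ℂ)
    (hA : A.IsHermitian)
    (hA11 : IsUnit A.toBlocks₁₁) :
    HasDerivAt (fun t : ℝ => PPT (A + (t : ℂ) • H))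
      ((Matrix.fromBlocks (A.toBlocks₁₁)⁻¹ (-((A.toBlocks₁₁)⁻¹ * A.toBlocks₁₂)) 0 1)ᴴ *
        H * Matrix.fromBlocks (A.toBlocks₁₁)⁻¹ (-((A.toBlocks₁₁)⁻¹ * A.toBlocks₁₂)) 0 1)
      0 := by
  set P : Matrix (Fin n ⊕ Fin m) (Fin n ⊕ Fin m) ℂ := blockProj₁
  set Q : Matrix (Fin n ⊕ Fin m) (Fin n ⊕ Fin m) ℂ := blockProj₂
  have hY : IsUnit (Q + P * A) := isUnit_blockProj₂_add_blockProj₁_mul_iff.mpr hA11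
  have hPPT : (fun t : ℝ => PPT (A + (t : ℂ) • H)) =ᶠ[𝓝 0]
      fun t : ℝ => (Q * A - P + t • (Q * H)) * Ring.inverse (Q + P * A + t • (P * H)) := by
    filter_upwards [eventually_isUnit_add_smul (P * H) hY] with t ht
    have hY_t : Q + P * (A + (t : ℂ) • H) = Q + P * A + t • (P * H) := by
      rw [Complex.coe_smul, mul_add, mul_smul_comm, add_assoc]
    have hX_t : Q * (A + (t : ℂ) • H) - P = Q * A - P + t • (Q * H) := by
      rw [Complex.coe_smul, mul_add, mul_smul_comm]
      abel
    rw [← hY_t, isUnit_blockProj₂_add_blockProj₁_mul_iff] at ht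
    rw [ppt_eq_mul_inv ht, hX_t, hY_t, nonsing_inv_eq_ringInverse]
  refine ((hasDerivAt_add_smul_mul_ringInverse_add_smul _ (Q * H) _ (P * H) hY).congr_of_eventuallyEq
    hPPT).congr_deriv ?_
  rw [← nonsing_inv_eq_ringInverse, ← ppt_eq_mul_inv hA11, ← Matrix.mul_assoc (PPT A), ← sub_mul,
    blockProj₂_sub_ppt_mul_blockProj₁, inv_blockProj₂_add_blockProj₁_mul hA11,
    IsHermitian.conjTranspose_fromBlocks_inv_neg_inv_mul hA]

theorem ppt_hasDerivAt {n m : ℕ}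
    (A H : Matrix (Fin n ⊕ Fin m) (Fin n ⊕ Fin m) ℂ)
    (hA : A.IsHermitian) (hH : H.IsHermitian)
    (hA11 : IsUnit A.toBlocks₁₁) :
    HasDerivAt (fun t : ℝ => PPT (A + (t : ℂ) • H))
      ((Matrix.fromBlocks (A.toBlocks₁₁)⁻¹ (-((A.toBlocks₁₁)⁻¹ * A.toBlocks₁₂)) 0 1)ᴴ *
        H * Matrix.fromBlocks (A.toBlocks₁₁)⁻¹ (-((A.toBlocks₁₁)⁻¹ * A.toBlocks₁₂)) 0 1)
      0 :=
  ppt_hasDerivAt_general A H hA hA11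

end Main
end

section
/- Let A = [A11, A12; A21, A22] and B = [B11, B12; B21, B22] be like-sized self-adjoint block 2×2 complex matrices such that for every t ∈ [0,1] the matrix (1−t)A11 + tB11 is invertible. If A ⪯ B (i.e., B − A is positive semidefinite), then PPT(A) ⪯ PPT(B). -/
open Matrix
open scoped ComplexOrder

/-!
Along the segment `M t = A + t (B - A)` the pivot transform satisfies the exact difference
formula `PPT (M t) - PPT (M s) = (t - s) • J(s)ᴴ (B - A) J(t)`, where `J(t)` is the
upper block-triangular factor `[M₁₁⁻¹, -M₁₁⁻¹M₁₂; 0, 1]` of `M t`. Hence each quadratic form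
`t ↦ re ⟪x, PPT (M t) x⟫` has derivative `re ⟪J(t) x, (B - A) J(t) x⟫ ≥ 0` as long as the
`(1,1)` block of `M t` stays invertible, so it is nondecreasing on `[0, 1]`.
-/

open Set

theorem Convex.monotoneOn_of_sub_eq_mul {D : Set ℝ} (hD : Convex ℝ D) {g : ℝ → ℝ}
    {φ : ℝ → ℝ → ℝ} (hsub : ∀ s ∈ D, ∀ t ∈ D, g t - g s = (t - s) * φ s t)
    (hφ : ∀ s ∈ D, ContinuousWithinAt (φ s) D s) (hdiag : ∀ s ∈ D, 0 ≤ φ s s) :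
    MonotoneOn g D := by
  have hderiv : ∀ s ∈ D, HasDerivWithinAt g (φ s s) D s := by
    intro s hs
    rw [hasDerivWithinAt_iff_tendsto_slope]
    refine ((hφ s hs).mono sdiff_subset).congr' ?_
    filter_upwards [self_mem_nhdsWithin] with t ⟨ht, hts⟩
    rw [slope_def_field, hsub s hs t ht, mul_div_cancel_left₀ _ (sub_ne_zero.2 hts)]
  exact monotoneOn_of_hasDerivWithinAt_nonneg hD
    (fun s hs => (hderiv s hs).continuousWithinAt)
    (fun s hs => (hderiv s (interior_subset hs)).mono interior_subset)
    (fun s hs => hdiag s (interior_subset hs))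

namespace Matrix

variable {n m 𝕜 : Type*} [RCLike 𝕜]

lemma IsHermitian.posSemidef_of_re_dotProduct_nonneg [Fintype n] {M : Matrix n n 𝕜}
    (hM : M.IsHermitian) (h : ∀ x, 0 ≤ RCLike.re (star x ⬝ᵥ M *ᵥ x)) : M.PosSemidef :=
  .of_dotProduct_mulVec_nonneg hM fun x =>
    RCLike.nonneg_iff.mpr ⟨h x, hM.im_star_dotProduct_mulVec_self x⟩

lemma IsHermitian.toBlocks {M : Matrix (n ⊕ m) (n ⊕ m) 𝕜} (hM : M.IsHermitian) :
    M.toBlocks₁₁.IsHermitian ∧ M.toBlocks₁₂ᴴ = M.toBlocks₂₁ ∧ M.toBlocks₂₂.IsHermitian := by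
  rw [← fromBlocks_toBlocks M, isHermitian_fromBlocks_iff] at hM
  exact ⟨hM.1, hM.2.1, hM.2.2.2⟩

variable [Fintype n] [DecidableEq n] [DecidableEq m]

noncomputable def pivotFactor (M : Matrix (n ⊕ m) (n ⊕ m) 𝕜) : Matrix (n ⊕ m) (n ⊕ m) 𝕜 :=
  fromBlocks M.toBlocks₁₁⁻¹ (-(M.toBlocks₁₁⁻¹ * M.toBlocks₁₂)) 0 1

lemma conjTranspose_pivotFactor {M : Matrix (n ⊕ m) (n ⊕ m) 𝕜} (hM : M.IsHermitian) :
    (pivotFactor M)ᴴ = fromBlocks M.toBlocks₁₁⁻¹ 0 (-(M.toBlocks₂₁ * M.toBlocks₁₁⁻¹)) 1 := by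
  obtain ⟨h₁₁, h₁₂, -⟩ := hM.toBlocks
  rw [pivotFactor, fromBlocks_conjTranspose, conjTranspose_nonsing_inv, h₁₁.eq, conjTranspose_neg,
    conjTranspose_mul, conjTranspose_nonsing_inv, h₁₁.eq, h₁₂, conjTranspose_zero,
    conjTranspose_one]

lemma continuousAt_pivotFactor {M : Matrix (n ⊕ m) (n ⊕ m) 𝕜} (hM : IsUnit M.toBlocks₁₁) :
    ContinuousAt pivotFactor M := by
  have hinv : ContinuousAt (fun N : Matrix (n ⊕ m) (n ⊕ m) 𝕜 => N.toBlocks₁₁⁻¹) M := by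
    refine (continuousAt_matrix_inv _ ?_).comp (continuous_id.matrix_submatrix _ _).continuousAt
    rw [Ring.inverse_eq_inv']
    exact continuousAt_inv₀ ((isUnit_iff_isUnit_det _).mp hM).ne_zero
  have hblocks : Continuous fun p : Matrix n n 𝕜 × Matrix n m 𝕜 =>
      fromBlocks p.1 (-(p.1 * p.2)) (0 : Matrix m n 𝕜) (1 : Matrix m m 𝕜) :=
    continuous_fst.matrix_fromBlocks (continuous_fst.matrix_mul continuous_snd).neg
      continuous_const continuous_const
  exact ContinuousAt.comp (x := M) (g := fun p : Matrix n n 𝕜 × Matrix n m 𝕜 =>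
      fromBlocks p.1 (-(p.1 * p.2)) (0 : Matrix m n 𝕜) (1 : Matrix m m 𝕜))
    (f := fun N : Matrix (n ⊕ m) (n ⊕ m) 𝕜 => (N.toBlocks₁₁⁻¹, N.toBlocks₁₂))
    hblocks.continuousAt (hinv.prodMk (continuous_id.matrix_submatrix _ _).continuousAt)

end Matrix

section PPT

variable {n m : ℕ}

lemma isHermitian_ppt {M : Matrix (Fin n ⊕ Fin m) (Fin n ⊕ Fin m) ℂ} (hM : M.IsHermitian) :
    (PPT M).IsHermitian := by
  obtain ⟨h₁₁, h₁₂, h₂₂⟩ := hM.toBlocks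
  refine IsHermitian.fromBlocks h₁₁.inv.neg ?_ (h₂₂.sub ?_)
  · rw [conjTranspose_mul, conjTranspose_nonsing_inv, h₁₁.eq, h₁₂]
  · rw [← h₁₂]
    exact isHermitian_conjTranspose_mul_mul _ h₁₁.inv

lemma ppt_sub_ppt {M N : Matrix (Fin n ⊕ Fin m) (Fin n ⊕ Fin m) ℂ} (hM : M.IsHermitian)
    (hM₁₁ : IsUnit M.toBlocks₁₁) (hN₁₁ : IsUnit N.toBlocks₁₁) :
    PPT N - PPT M = (pivotFactor M)ᴴ * (N - M) * pivotFactor N := by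
  rw [isUnit_iff_isUnit_det] at hM₁₁ hN₁₁
  have hNM : N - M = fromBlocks (N.toBlocks₁₁ - M.toBlocks₁₁) (N.toBlocks₁₂ - M.toBlocks₁₂)
      (N.toBlocks₂₁ - M.toBlocks₂₁) (N.toBlocks₂₂ - M.toBlocks₂₂) := by
    ext (i | i) (j | j) <;> rfl
  rw [conjTranspose_pivotFactor hM, pivotFactor, hNM, PPT, PPT, sub_eq_add_neg, fromBlocks_neg,
    fromBlocks_add, fromBlocks_multiply, fromBlocks_multiply, fromBlocks_inj]
  simp only [Matrix.zero_mul, Matrix.mul_zero, sub_self, add_zero, Matrix.one_mul, Matrix.mul_one,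
    Matrix.mul_sub, Matrix.sub_mul, Matrix.add_mul, Matrix.neg_mul, Matrix.mul_neg,
    Matrix.mul_assoc, nonsing_inv_mul _ hM₁₁, mul_nonsing_inv _ hN₁₁,
    mul_nonsing_inv_cancel_left _ _ hN₁₁]
  refine ⟨?_, ?_, ?_, ?_⟩ <;> abel

variable {A D : Matrix (Fin n ⊕ Fin m) (Fin n ⊕ Fin m) ℂ}

lemma ppt_segment_sub (hA : A.IsHermitian) (hD : D.IsHermitian) {s t : ℝ}
    (hs : IsUnit (A + s • D).toBlocks₁₁) (ht : IsUnit (A + t • D).toBlocks₁₁) :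
    PPT (A + t • D) - PPT (A + s • D) =
      (t - s) • ((pivotFactor (A + s • D))ᴴ * D * pivotFactor (A + t • D)) := by
  rw [ppt_sub_ppt (hA.add (hD.smul (.all s))) hs ht, add_sub_add_left_eq_sub, ← sub_smul,
    Matrix.mul_smul, Matrix.smul_mul]

lemma monotoneOn_re_dotProduct_ppt_segment (hA : A.IsHermitian) (hD : D.PosSemidef)
    {S : Set ℝ} (hS : Convex ℝ S) (hunit : ∀ t ∈ S, IsUnit (A + t • D).toBlocks₁₁)
    (x : Fin n ⊕ Fin m → ℂ) :
    MonotoneOn (fun t : ℝ => (star x ⬝ᵥ PPT (A + t • D) *ᵥ x).re) S := by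
  refine hS.monotoneOn_of_sub_eq_mul (φ := fun s t =>
    (star x ⬝ᵥ ((pivotFactor (A + s • D))ᴴ * D * pivotFactor (A + t • D)) *ᵥ x).re) ?_ ?_ ?_
  · intro s hs t ht
    rw [← Complex.sub_re, ← dotProduct_sub, ← sub_mulVec,
      ppt_segment_sub hA hD.isHermitian (hunit s hs) (hunit t ht), smul_mulVec, dotProduct_smul,
      Complex.smul_re, smul_eq_mul]
  · intro s hs
    have hfactor : ContinuousAt (fun t : ℝ => pivotFactor (A + t • D)) s :=
      (continuousAt_pivotFactor (hunit s hs)).comp (f := fun t : ℝ => A + t • D) (by fun_prop)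
    refine (ContinuousAt.comp (g := fun J => (star x ⬝ᵥ
      ((pivotFactor (A + s • D))ᴴ * D * J) *ᵥ x).re) ?_ hfactor).continuousWithinAt
    fun_prop
  · intro s _
    exact (hD.conjTranspose_mul_mul_same _).re_dotProduct_nonneg x

end PPT

theorem ppt_monotone {n m : ℕ}
    (A B : Matrix (Fin n ⊕ Fin m) (Fin n ⊕ Fin m) ℂ)
    (hA : A.IsHermitian) (hB : B.IsHermitian)
    (hline : ∀ t : ℝ, t ∈ Set.Icc (0 : ℝ) 1 →
      IsUnit (((1 - t : ℝ) : ℂ) • A.toBlocks₁₁ + ((t : ℝ) : ℂ) • B.toBlocks₁₁))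
    (hAB : (B - A).PosSemidef) :
    (PPT B - PPT A).PosSemidef := by
  have hblock : ∀ t : ℝ, (A + t • (B - A)).toBlocks₁₁ =
      ((1 - t : ℝ) : ℂ) • A.toBlocks₁₁ + ((t : ℝ) : ℂ) • B.toBlocks₁₁ := by
    intro t
    ext i j
    simp only [toBlocks₁₁, of_apply, Matrix.add_apply, Matrix.smul_apply, Matrix.sub_apply,
      Complex.real_smul, Complex.ofReal_sub, Complex.ofReal_one, smul_of, Pi.smul_apply,
      smul_eq_mul]
    ring
  have hmono := monotoneOn_re_dotProduct_ppt_segment hA hAB (convex_Icc 0 1)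
    fun t ht => hblock t ▸ hline t ht
  refine ((isHermitian_ppt hB).sub (isHermitian_ppt hA)).posSemidef_of_re_dotProduct_nonneg
    fun x => ?_
  have h01 := hmono x (left_mem_Icc.2 zero_le_one) (right_mem_Icc.2 zero_le_one) zero_le_one
  simp only [zero_smul, add_zero, one_smul, add_sub_cancel] at h01
  simpa [sub_mulVec, dotProduct_sub] using h01
end
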